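/- Let π = (π₁,...,π_r) be a partition and λ a Young diagram. The number N_{G_π}(λ) of injective embeddings of the bicoloured graph G_π into λ equals ∏*_r Σ_i λ_i^{underline π_r}, where the product ∗ means that repeated choices of the same row i combine falling factorials: λ_i^{underline a} ∗ λ_i^{underline b} = λ_i^{underline (a+b)}. Equivalently, N_{G_π}(λ) = Σ over functions f: {1,...,r} → rows of λ of ∏_{rows i} (λ_i)·(λ_i − 1)⋯(λ_i − s_i + 1), where s_i = Σ_{j: f(j)=i} π_j. -/

import Mathlib

/-- the number of injective embeddings of the bicoloured graph `G_π`
(with `r` black vertices of degrees `π 0, …, π (r-1)` and `|π|` degree-one white vertices)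
into a Young diagram with row lengths `l 0, …, l (R-1)` is
`∑_{f : black vertices → rows} ∏_{rows i} (l i)^{\underline{s_i}}`, where
`s_i = ∑_{j : f j = i} π j`. An embedding is encoded as a choice of a row `f j` for each
black vertex `j` together with a column `c j e < l (f j)` for each edge `(j, e)`, such that
the induced map from edges to boxes `(f j, c j e)` is injective. -/
theorem stmt_9 (r R : ℕ) (π : Fin r → ℕ) (l : Fin R → ℕ) :
    Fintype.card
        {p : (Σ f : Fin r → Fin R, ((j : Fin r) → Fin (π j) → Fin (l (f j)))) //
          ∀ (j j' : Fin r) (e : Fin (π j)) (e' : Fin (π j')),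
            p.1 j = p.1 j' → ((p.2 j e : ℕ) = (p.2 j' e' : ℕ)) →
              (⟨j, e⟩ : Σ j : Fin r, Fin (π j)) = ⟨j', e'⟩} =
      ∑ f : Fin r → Fin R, ∏ i : Fin R,
        (l i).descFactorial (∑ j ∈ Finset.univ.filter (fun j => f j = i), π j) := by
  classical
  have e1 : {p : (Σ f : Fin r → Fin R, ((j : Fin r) → Fin (π j) → Fin (l (f j)))) //
          ∀ (j j' : Fin r) (e : Fin (π j)) (e' : Fin (π j')),
            p.1 j = p.1 j' → ((p.2 j e : ℕ) = (p.2 j' e' : ℕ)) →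
              (⟨j, e⟩ : Σ j : Fin r, Fin (π j)) = ⟨j', e'⟩} ≃
      Σ f : Fin r → Fin R, {c : (j : Fin r) → Fin (π j) → Fin (l (f j)) //
          ∀ (j j' : Fin r) (e : Fin (π j)) (e' : Fin (π j')),
            f j = f j' → ((c j e : ℕ) = (c j' e' : ℕ)) →
              (⟨j, e⟩ : Σ j : Fin r, Fin (π j)) = ⟨j', e'⟩} :=
    { toFun := fun p => ⟨p.1.1, p.1.2, p.2⟩
      invFun := fun q => ⟨⟨q.1, q.2.1⟩, q.2.2⟩
      left_inv := fun p => rfl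
      right_inv := fun q => rfl }
  rw [Fintype.card_congr e1, Fintype.card_sigma]
  refine Finset.sum_congr rfl fun f _ => ?_
  have e2 : {c : (j : Fin r) → Fin (π j) → Fin (l (f j)) //
          ∀ (j j' : Fin r) (e : Fin (π j)) (e' : Fin (π j')),
            f j = f j' → ((c j e : ℕ) = (c j' e' : ℕ)) →
              (⟨j, e⟩ : Σ j : Fin r, Fin (π j)) = ⟨j', e'⟩} ≃
      ∀ i : Fin R, ((Σ j : {j : Fin r // f j = i}, Fin (π (j : Fin r))) ↪ Fin (l i)) := by
    refine
      { toFun := fun c i =>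
          ⟨fun x => Fin.cast (congrArg l x.1.2) (c.1 x.1.1 x.2), ?_⟩
        invFun := fun g =>
          ⟨fun j e => g (f j) ⟨⟨j, rfl⟩, e⟩, ?_⟩
        left_inv := ?_
        right_inv := ?_ }
    · rintro ⟨⟨j, hj⟩, e⟩ ⟨⟨j', hj'⟩, e'⟩ h
      have hv : (c.1 j e : ℕ) = (c.1 j' e' : ℕ) := by
        simpa [Fin.coe_cast] using congrArg Fin.val h
      have hs := c.2 j j' e e' (hj.trans hj'.symm) hv
      have h1 : j = j' := congrArg Sigma.fst hs
      subst h1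
      have h2 : e = e' := by simpa using hs
      subst h2
      rfl
    · rename_i g
      intro j j' e e' hf hv
      have key : ∀ (j0 : Fin r) (e0 : Fin (π j0)) (i : Fin R) (h : f j0 = i),
          (g (f j0) ⟨⟨j0, rfl⟩, e0⟩ : ℕ) = (g i ⟨⟨j0, h⟩, e0⟩ : ℕ) := by
        intro j0 e0 i h; subst h; rfl
      have hv' : g (f j) ⟨⟨j, rfl⟩, e⟩ = g (f j) ⟨⟨j', hf.symm⟩, e'⟩ := by
        apply Fin.ext
        rw [hv, key j' e' (f j) hf.symm]
      have hs := (g (f j)).injective hv'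
      have h1 : j = j' := congrArg (fun x => (x.1 : Fin r)) hs
      subst h1
      have h2 : e = e' := by simpa using hs
      subst h2
      rfl
    · intro c
      apply Subtype.ext
      funext j e
      apply Fin.ext
      rfl
    · intro g
      funext i
      apply DFunLike.ext
      rintro ⟨⟨j, hj⟩, e⟩
      subst hj
      apply Fin.ext
      rfl
  rw [Fintype.card_congr e2, Fintype.card_pi]
  refine Finset.prod_congr rfl fun i _ => ?_
  rw [Fintype.card_embedding_eq, Fintype.card_fin]
  congr 1
  rw [Fintype.card_sigma]
  simp only [Fintype.card_fin]
  exact (Finset.sum_subtype (Finset.univ.filter fun j => f j = i)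
    (fun j => by simp) π).symm
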